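/- arXiv:2603.10203 — 2 statements merged into one kernel-verified Lean document; each statement's English description precedes it below -/
import Mathlib

section
/- Let k ≥ 2 and q = 2^(2k-1), and let D = { x^(2^k - 1) + x^(2^k) : x ∈ F_q }. Then u ∈ D if and only if Tr(u^(2^k + 1)) = 0. -/
section helpers

variable {F : Type*} [Field F] [Fintype F] [Algebra (ZMod 2) F] [CharP F 2]

noncomputable def frobAlgEquiv (F : Type*) [Field F] [Fintype F] [Algebra (ZMod 2) F]
    [CharP F 2] : F ≃ₐ[ZMod 2] F := by
  haveI : Fact (Nat.Prime 2) := ⟨Nat.prime_two⟩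
  refine AlgEquiv.ofBijective ⟨frobenius F 2, ?_⟩ ?_
  · intro r
    show frobenius F 2 (algebraMap (ZMod 2) F r) = algebraMap (ZMod 2) F r
    rw [frobenius_def, ← map_pow, ZMod.pow_card r]
  · exact (Finite.injective_iff_bijective).mp (frobenius_inj F 2)

lemma tr_sq (x : F) : Algebra.trace (ZMod 2) F (x ^ 2) = Algebra.trace (ZMod 2) F x := by
  haveI : Fact (Nat.Prime 2) := ⟨Nat.prime_two⟩
  have := Algebra.trace_eq_of_algEquiv (frobAlgEquiv F) x
  simpa [frobAlgEquiv, frobenius_def] using this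

lemma tr_pow2 (j : ℕ) (x : F) :
    Algebra.trace (ZMod 2) F (x ^ 2 ^ j) = Algebra.trace (ZMod 2) F x := by
  induction j with
  | zero => simp
  | succ n ih =>
    have : x ^ 2 ^ (n + 1) = (x ^ 2 ^ n) ^ 2 := by
      rw [← pow_mul, pow_succ]
    rw [this, tr_sq, ih]

lemma tr_pow2mul (j n : ℕ) (x : F) :
    Algebra.trace (ZMod 2) F (x ^ (n * 2 ^ j)) = Algebra.trace (ZMod 2) F (x ^ n) := by
  rw [pow_mul, tr_pow2]

lemma artin_schreier (c : F) (hc : Algebra.trace (ZMod 2) F c = 0) :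
    ∃ w : F, w ^ 2 + w = c := by
  haveI : Fact (Nat.Prime 2) := ⟨Nat.prime_two⟩
  classical
  let φ : F →+ F :=
    { toFun := fun w => w ^ 2 + w
      map_zero' := by norm_num
      map_add' := by
        intro a b
        show (a + b) ^ 2 + (a + b) = (a ^ 2 + a) + (b ^ 2 + b)
        have h2 : (2 : F) = 0 := CharTwo.two_eq_zero
        linear_combination (a * b) * h2 }
  let L : F →ₗ[ZMod 2] F := φ.toZModLinearMap 2
  let T : F →ₗ[ZMod 2] ZMod 2 := Algebra.trace (ZMod 2) F
  have hker : LinearMap.ker L = Submodule.span (ZMod 2) {(1 : F)} := by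
    ext x
    simp only [LinearMap.mem_ker, Submodule.mem_span_singleton]
    constructor
    · intro hx
      have hx' : x * (x + 1) = 0 := by
        have : L x = x ^ 2 + x := rfl
        rw [this] at hx
        linear_combination hx
      rcases mul_eq_zero.mp hx' with h | h
      · exact ⟨0, by simp [h]⟩
      · refine ⟨1, ?_⟩
        rw [one_smul]
        linear_combination -h + CharTwo.two_eq_zero (R := F)
    · rintro ⟨a, rfl⟩
      have key : ((a.val : ℕ) : ZMod 2) = a := ZMod.natCast_rightInverse a
      have hv : a.val < 2 := ZMod.val_lt a
      have ha : a = 0 ∨ a = 1 := by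
        rcases (by omega : a.val = 0 ∨ a.val = 1) with h | h
        · left; rw [← key, h]; norm_num
        · right; rw [← key, h]; norm_num
      rcases ha with rfl | rfl
      · show φ _ = 0; simp [φ]
      · show φ _ = 0
        simp only [one_smul, φ, AddMonoidHom.coe_mk, ZeroHom.coe_mk, one_pow]
        exact CharTwo.add_self_eq_zero 1
  have hrange : LinearMap.range L ≤ LinearMap.ker T := by
    rintro _ ⟨w, rfl⟩
    have : L w = w ^ 2 + w := rfl
    simp only [LinearMap.mem_ker, this, T, map_add, tr_sq]
    exact CharTwo.add_self_eq_zero _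
  have hTsurj : Function.Surjective T := Algebra.trace_surjective (ZMod 2) F
  have hrt : LinearMap.range T = ⊤ := LinearMap.range_eq_top.mpr hTsurj
  have e1 := LinearMap.finrank_range_add_finrank_ker L
  have e2 := LinearMap.finrank_range_add_finrank_ker T
  rw [hker, finrank_span_singleton (one_ne_zero)] at e1
  rw [hrt, finrank_top, Module.finrank_self] at e2
  have hle : LinearMap.ker T ≤ LinearMap.range L := by
    have := Submodule.eq_of_le_of_finrank_le hrange (by omega)
    exact this.ge
  obtain ⟨w, hw⟩ := hle hc
  exact ⟨w, hw⟩

end helpers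

theorem stmt_14 {k : ℕ} (hk : 2 ≤ k) (F : Type*) [Field F] [Fintype F]
    [Algebra (ZMod 2) F] (hcard : Fintype.card F = 2 ^ (2 * k - 1))
    (D : Set F) (hD : D = {u : F | ∃ x : F, u = x ^ (2 ^ k - 1) + x ^ (2 ^ k)})
    (u : F) :
    u ∈ D ↔ Algebra.trace (ZMod 2) F (u ^ (2 ^ k + 1)) = 0 := by
  haveI : Fact (Nat.Prime 2) := ⟨Nat.prime_two⟩
  haveI hch : CharP F 2 := charP_of_injective_algebraMap (algebraMap (ZMod 2) F).injective 2
  have h2F : (2 : F) = 0 := CharTwo.two_eq_zero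
  have h4 : 4 ≤ 2 ^ k := by
    calc (4:ℕ) = 2 ^ 2 := by norm_num
    _ ≤ 2 ^ k := Nat.pow_le_pow_right (by norm_num) hk
  have h2k : 2 ^ (k-1) * 2 = 2 ^ k := by rw [← pow_succ]; congr 1; omega
  have hq : ∀ x : F, x ^ 2 ^ (2*k-1) = x := by
    intro x; rw [← hcard]; exact FiniteField.pow_card x
  have hmsq : ∀ x : F, x ^ (2^k * 2^k) = x ^ 2 := by
    intro x
    have he : 2^k * 2^k = 2^(2*k-1) * 2 := by
      rw [← pow_add, ← pow_succ]; congr 1; omega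
    rw [he, pow_mul, hq]
  have htr : ∀ y : F, Algebra.trace (ZMod 2) F (y ^ (2^k+1))
      = Algebra.trace (ZMod 2) F (y ^ (2^k+2)) := by
    intro y
    have hA : Algebra.trace (ZMod 2) F (y ^ (2^k+2))
        = Algebra.trace (ZMod 2) F (y ^ (2^(k-1)+1)) := by
      have he : 2^k + 2 = (2^(k-1)+1) * 2^1 := by rw [pow_one]; omega
      rw [he, tr_pow2mul]
    have hB : Algebra.trace (ZMod 2) F (y ^ (2^k+1))
        = Algebra.trace (ZMod 2) F (y ^ (2^(k-1)+1)) := by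
      have e1 : Algebra.trace (ZMod 2) F (y ^ ((2^k+1) * 2^(k-1)))
          = Algebra.trace (ZMod 2) F (y ^ (2^k+1)) := tr_pow2mul _ _ _
      rw [← e1]
      have hkk : 2^k * 2^(k-1) = 2^(2*k-1) := by rw [← pow_add]; congr 1; omega
      have e2 : (2^k+1) * 2^(k-1) = 2^(k-1) + 2^(2*k-1) := by
        rw [add_mul, one_mul, hkk]; omega
      congr 1
      rw [e2, pow_add, hq, ← pow_succ]
    rw [hA, hB]
  have hzz : ∀ s t : ZMod 2, s + s + t + t = 0 := by
    intro s t
    rw [CharTwo.add_self_eq_zero, zero_add, CharTwo.add_self_eq_zero]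
  have hzz2 : ∀ s : ZMod 2, s + (0 + s) = 0 := by
    intro s
    rw [zero_add, CharTwo.add_self_eq_zero]
  have hfr : Module.finrank (ZMod 2) F = 2*k - 1 := by
    have hc2 := Module.card_eq_pow_finrank (K := ZMod 2) (V := F)
    rw [ZMod.card, hcard] at hc2
    exact (Nat.pow_right_injective (le_refl 2) hc2.symm)
  have hT1 : Algebra.trace (ZMod 2) F (1 : F) = 1 := by
    have htam := Algebra.trace_algebraMap (R := ZMod 2) (S := F) (1 : ZMod 2)
    rw [map_one] at htam
    rw [htam, hfr, nsmul_eq_mul, mul_one]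
    have hm : (2*k-1) % 2 = 1 := by omega
    rw [← ZMod.natCast_mod, hm, Nat.cast_one]
  constructor
  · intro hu
    rw [hD] at hu
    obtain ⟨x, hux⟩ := hu
    obtain ⟨a, ha⟩ : ∃ a, 2^k = a + 1 := ⟨2^k - 1, by omega⟩
    have hsub : 2^k - 1 = a := by omega
    rcases eq_or_ne x 0 with rfl | hx
    · have hu0 : u = 0 := by
        rw [hux, zero_pow (by omega : 2^k - 1 ≠ 0), zero_pow (by omega : 2^k ≠ 0), add_zero]
      rw [hu0, zero_pow (by omega : 2^k + 1 ≠ 0), map_zero]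
    · have hufac : u = x ^ a * (1 + x) := by rw [hux, hsub, ha]; ring
      have hum : u ^ 2^k = x ^ (a * 2^k) * (1 + x ^ 2^k) := by
        rw [hufac, mul_pow, ← pow_mul, add_pow_char_pow 1 x 2 k, one_pow]
      have hxell : x ^ (a * 2^k) * x ^ a * x = x ^ 2 := by
        rw [← pow_add, ← pow_succ]
        have he : a * 2^k + a + 1 = 2^k * 2^k := by rw [ha]; ring
        rw [he, hmsq]
      have hkey : u ^ (2^k + 1) = x + x^2 + x^(2^k+1) + x^(2^k+2) := by
        apply mul_left_cancel₀ hx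
        calc x * u ^ (2^k+1) = (x ^ (a * 2^k) * x ^ a * x) * ((1+x) * (1 + x^(2^k))) := by
              rw [pow_succ, hum, hufac]; ring
          _ = x^2 * ((1+x) * (1 + x^(2^k))) := by rw [hxell]
          _ = x * (x + x^2 + x^(2^k+1) + x^(2^k+2)) := by ring
      rw [hkey]
      simp only [map_add]
      rw [tr_sq, htr x]
      exact hzz _ _
  · intro h
    rw [hD]
    rcases eq_or_ne u 0 with rfl | hu0
    · exact ⟨0, by rw [zero_pow (by omega : 2^k - 1 ≠ 0), zero_pow (by omega : 2^k ≠ 0), add_zero]⟩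
    have hvne : u ^ (2^k+1) ≠ 0 := pow_ne_zero _ hu0
    have hcv : Algebra.trace (ZMod 2) F (u^(2^k+1) * (u+1)) = 0 := by
      have e : u^(2^k+1) * (u+1) = u^(2^k+2) + u^(2^k+1) := by ring
      rw [e, map_add, ← htr u]
      exact CharTwo.add_self_eq_zero _
    obtain ⟨w, hw⟩ := artin_schreier (u^(2^k+1) * (u+1)) hcv
    set z := w / u^(2^k+1) with hzdef
    have hzq : u^(2^k+1) * z^2 + z = u + 1 := by
      have e : u^(2^k+1) * z^2 + z = (w^2 + w) / u^(2^k+1) := by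
        rw [hzdef]; field_simp
      rw [e, hw, mul_div_cancel_left₀ _ hvne]
    have hvm : (u ^ (2^k+1)) ^ 2^k = u ^ (2^k + 2) := by
      rw [← pow_mul]
      have e : (2^k+1) * 2^k = 2^k*2^k + 2^k := by ring
      rw [e, pow_add, hmsq, ← pow_add]
      congr 1
      omega
    have E1 : u^(2^k+2) * (z^(2^k))^2 + z^(2^k) = u^(2^k) + 1 := by
      have E0 : (u^(2^k+1) * z^2 + z)^(2^k) = (u+1)^(2^k) := by rw [hzq]
      rw [add_pow_char_pow _ _ 2 k, add_pow_char_pow _ _ 2 k, mul_pow, hvm, one_pow] at E0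
      rw [show (z^2)^(2^k) = (z^(2^k))^2 by rw [← pow_mul, ← pow_mul, Nat.mul_comm]] at E0
      exact E0
    have hBq : u^(2^k+1) * (u * z^(2^k) + 1)^2 + (u * z^(2^k) + 1) = u + 1 := by
      linear_combination u * E1 + (u^(2^k+2) * z^(2^k) + u^(2^k+1)) * h2F
    have hdq : u^(2^k+1) * (u * z^(2^k) + 1 + z)^2 = u * z^(2^k) + 1 + z := by
      linear_combination hBq + hzq
        + (u^(2^k+1) * (u*z^(2^k)+1) * z - (u*z^(2^k)+1) - z + u + 1) * h2F
    have he2 : (u^(2^k+1) * (u * z^(2^k) + 1 + z))^2 = u^(2^k+1) * (u * z^(2^k) + 1 + z) := by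
      linear_combination u^(2^k+1) * hdq
    have hd01 : u^(2^k+1) * (u * z^(2^k) + 1 + z) = 0
        ∨ u^(2^k+1) * (u * z^(2^k) + 1 + z) = 1 := by
      rcases mul_eq_zero.mp (show (u^(2^k+1) * (u * z^(2^k) + 1 + z))
          * (u^(2^k+1) * (u * z^(2^k) + 1 + z) - 1) = 0 by linear_combination he2) with h' | h'
      · exact Or.inl h'
      · exact Or.inr (by linear_combination h')
    have hTe : Algebra.trace (ZMod 2) F (u^(2^k+1) * (u * z^(2^k) + 1 + z)) = 0 := by
      have he : u^(2^k+1) * (u * z^(2^k) + 1 + z)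
          = (u^(2^k+1)*z)^(2^k) + (u^(2^k+1) + u^(2^k+1)*z) := by
        rw [mul_pow, hvm]; ring
      rw [he, map_add, map_add, tr_pow2, h]
      exact hzz2 _
    have hd0 : u * z^(2^k) + 1 + z = 0 := by
      rcases hd01 with h' | h'
      · exact (mul_eq_zero.mp h').resolve_left hvne
      · exfalso
        rw [h', hT1] at hTe
        exact one_ne_zero hTe
    have hz0 : z ≠ 0 := by
      intro h0
      rw [h0] at hzq
      have hu1 : u = 1 := by linear_combination -hzq - h2F
      rw [hu1, one_pow, hT1] at h
      exact one_ne_zero h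
    have hdz : u * z^(2^k) = z + 1 := by
      linear_combination hd0 - (z + 1) * h2F
    refine ⟨z⁻¹, ?_⟩
    have hzkne : z ^ (2^k) ≠ 0 := pow_ne_zero _ hz0
    have h1ne : z ^ (2^k - 1) ≠ 0 := pow_ne_zero _ hz0
    have hsplit : z ^ (2^k) = z^(2^k-1) * z := by rw [← pow_succ]; congr 1; omega
    apply mul_right_cancel₀ hzkne
    rw [hdz, add_mul, inv_pow, inv_pow]
    have t2 : (z^(2^k))⁻¹ * z^(2^k) = 1 := inv_mul_cancel₀ hzkne
    have t1 : (z^(2^k-1))⁻¹ * z^(2^k) = z := by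
      rw [hsplit, ← mul_assoc, inv_mul_cancel₀ h1ne, one_mul]
    rw [t1, t2]
end

section
/- Let n be odd and a ∈ F_{2^n} nonzero, and let h(x) = x + a⁻¹·Tr(a³x³). Then h(x) = h(y) if and only if x = y or x + y = a⁻¹. -/
/-!
In characteristic 2 the map is `h x = x + a⁻¹ ε(x)` with `ε(x) ∈ {0, 1}`, so `h x = h y` forces
`x + y ∈ {0, a⁻¹}`. Conversely, with `z = a x` we have `(z + 1)³ = z³ + (z² + z) + 1`; the trace is
Frobenius-invariant, so `Tr (z² + z) = 0`, and `Tr 1 = n = 1` because `n` is odd. Hence adding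
`a⁻¹` to `x` flips `ε`, and `h (x + a⁻¹) = x + a⁻¹ + a⁻¹ (ε(x) + 1) = h x`.
-/

open Algebra

theorem Algebra.trace_pow_card {K L : Type*} [Field K] [Fintype K] [Field L] [Algebra K L]
    [Algebra.IsAlgebraic K L] (x : L) : trace K L (x ^ Fintype.card K) = trace K L x :=
  trace_eq_of_algEquiv (FiniteField.frobeniusAlgEquivOfAlgebraic K L) x

theorem Algebra.trace_one_zmod_two_of_odd_finrank {L : Type*} [Field L] [Algebra (ZMod 2) L]
    (hL : Odd (Module.finrank (ZMod 2) L)) : trace (ZMod 2) L 1 = 1 := by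
  rw [← map_one (algebraMap (ZMod 2) L), trace_algebraMap, nsmul_one, hL.natCast_zmod_two]

theorem CharTwo.eq_or_add_eq_of_add_mul_algebraMap_eq {R : Type*} [CommRing R] [CharP R 2]
    [Algebra (ZMod 2) R] {c x y : R} {s t : ZMod 2}
    (h : x + c * algebraMap (ZMod 2) R s = y + c * algebraMap (ZMod 2) R t) :
    x = y ∨ x + y = c := by
  have hsum : x + y = c * algebraMap (ZMod 2) R (s + t) := by
    rw [map_add]
    linear_combination h + (y - c * algebraMap (ZMod 2) R s) * CharTwo.two_eq_zero (R := R)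
  rcases (by decide : ∀ u : ZMod 2, u = 0 ∨ u = 1) (s + t) with h0 | h1
  · left
    rwa [h0, map_zero, mul_zero, CharTwo.add_eq_zero] at hsum
  · right
    rwa [h1, map_one, mul_one] at hsum

section ZModTwo

variable {L : Type*} [Field L] [Algebra (ZMod 2) L] [Algebra.IsAlgebraic (ZMod 2) L]

theorem Algebra.trace_sq_zmod_two (x : L) : trace (ZMod 2) L (x ^ 2) = trace (ZMod 2) L x := by
  simpa using trace_pow_card (K := ZMod 2) x

theorem Algebra.trace_add_one_pow_three_zmod_two (z : L) :
    trace (ZMod 2) L ((z + 1) ^ 3) = trace (ZMod 2) L (z ^ 3) + trace (ZMod 2) L 1 := by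
  have hcross : trace (ZMod 2) L (3 * (z ^ 2 + z)) = 0 := by
    rw [← map_ofNat (algebraMap (ZMod 2) L) 3, ← smul_def, map_smul, map_add,
      trace_sq_zmod_two, smul_eq_mul]
    have six : (6 : ZMod 2) = 0 := by decide
    linear_combination trace (ZMod 2) L z * six
  rw [show (z + 1) ^ 3 = z ^ 3 + 1 + 3 * (z ^ 2 + z) by ring, map_add, map_add, hcross, add_zero]

theorem Algebra.trace_mul_pow_three_add_inv_zmod_two (hL : Odd (Module.finrank (ZMod 2) L))
    {a : L} (ha : a ≠ 0) (x : L) :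
    trace (ZMod 2) L (a ^ 3 * (x + a⁻¹) ^ 3) = trace (ZMod 2) L (a ^ 3 * x ^ 3) + 1 := by
  rw [← mul_pow, mul_add, mul_inv_cancel₀ ha, trace_add_one_pow_three_zmod_two, mul_pow,
    trace_one_zmod_two_of_odd_finrank hL]

end ZModTwo

theorem stmt_17 {n : ℕ} (hn : Odd n) (F : Type*) [Field F] [Fintype F]
    [Algebra (ZMod 2) F] (hcard : Fintype.card F = 2 ^ n)
    (a : F) (ha : a ≠ 0)
    (h : F → F)
    (hh : ∀ x, h x = x + a⁻¹ * algebraMap (ZMod 2) F (Algebra.trace (ZMod 2) F (a ^ 3 * x ^ 3)))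
    (x y : F) :
    h x = h y ↔ x = y ∨ x + y = a⁻¹ := by
  have : CharP F 2 := charP_of_injective_algebraMap' (ZMod 2) 2
  have hfinrank : Module.finrank (ZMod 2) F = n :=
    Nat.pow_right_injective le_rfl <| (FiniteField.pow_finrank_eq_card 2 F).trans hcard
  rw [hh, hh]
  refine ⟨CharTwo.eq_or_add_eq_of_add_mul_algebraMap_eq, ?_⟩
  rintro (rfl | hxy)
  · rfl
  · obtain rfl : y = x + a⁻¹ := by linear_combination hxy - x * CharTwo.two_eq_zero (R := F)
    rw [trace_mul_pow_three_add_inv_zmod_two (hfinrank ▸ hn) ha, map_add, map_one]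
    linear_combination -a⁻¹ * CharTwo.two_eq_zero (R := F)
end
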